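/- Let A be a DG category over a field k and let I be a strictly full DG subcategory of A. If the triangulated category D_c(I) of compact objects is right saturated, then i_* : D(A) → D(I) preserves compact objects. -/

import Mathlib

namespace DGRecollement

open CategoryTheory Limits Pretriangulated Opposite

universe v u w u'

section Compact

variable (C : Type u) [Category.{v} C]

def IsCompactObj [Preadditive C] (X : C) : Prop :=
  ∀ ⦃ι : Type v⦄ (Y : ι → C) [HasCoproduct Y],
    letI : DecidableEq ι := Classical.decEq ι
    Function.Bijective
      (DFinsupp.sumAddHom (fun i =>
        AddMonoidHom.mk' (fun (g : X ⟶ Y i) => g ≫ Sigma.ι Y i)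
          (fun _ _ => Preadditive.add_comp _ _ _ _ _ _)) :
        (Π₀ i, (X ⟶ Y i)) →+ (X ⟶ ∐ Y))

def IsCompactlyGenerated [Preadditive C] [HasZeroObject C] [HasShift C ℤ] : Prop :=
  ∃ (ι : Type v) (G : ι → C), (∀ i, IsCompactObj C (G i)) ∧
    ∀ X : C, (∀ (i : ι) (n : ℤ) (f : G i ⟶ X⟦n⟧), f = 0) → IsZero X

abbrev CompObj [Preadditive C] : Type u := ObjectProperty.FullSubcategory (fun X : C => IsCompactObj C X)

def homOf [Preadditive C] {X Y : CompObj C} (f : X.obj ⟶ Y.obj) : X ⟶ Y := ObjectProperty.homMk f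

end Compact

section Cone

variable {DI : Type u} {DA : Type u'} [Category.{v} DI] [Category.{v} DA]
  [HasZeroObject DA] [Preadditive DA] [HasShift DA ℤ]
  [∀ n : ℤ, (shiftFunctor DA n).Additive] [Pretriangulated DA]

/-- The class of morphisms of `D(A)` whose cone lies in the essential image of
`i^* : D(I) → D(A)`.  The Drinfeld quotient has the property that
`q^* : D(A) → D(A/I)` is a localization of `D(A)` at this class of morphisms,
i.e. `D(A/I)` is the Verdier quotient `D(A)/D(I)`. -/
def coneInEssImage (F : DI ⥤ DA) : MorphismProperty DA := fun X Y f =>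
  ∃ (Z : DA) (g : Y ⟶ Z) (h : Z ⟶ X⟦(1 : ℤ)⟧),
    (Triangle.mk f g h ∈ distTriang DA) ∧ F.essImage Z

end Cone

section Euler

variable (k : Type w) [Field k]
variable (C : Type u) [Category.{v} C] [Preadditive C] [Linear k C] [HasShift C ℤ]

/-- The Euler pairing `⟨[a],[b]⟩_χ = Σₙ (−1)ⁿ dim_k Hⁿ Hom_A(a,b)
  = Σₙ (−1)ⁿ dim_k Hom_{D(A)}(a, b⟦n⟧)` of two compact objects. -/
noncomputable def eulerChi (a b : CompObj C) : ℤ :=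
  ∑ᶠ n : ℤ, (n.negOnePow : ℤ) * (Module.finrank k ((a.obj : C) ⟶ b.obj⟦n⟧) : ℤ)

/-- `D_c(A)` is Ext-finite: for compact `X`, `Y` the total cohomology of the Hom-complex,
i.e. `⊕ₙ Hom_{D(A)}(X, Y⟦n⟧)`, is finite dimensional over `k`. -/
def ExtFiniteCompacts : Prop :=
  ∀ X Y : C, IsCompactObj C X → IsCompactObj C Y →
    (Set.Finite {n : ℤ | ∃ f : X ⟶ Y⟦n⟧, f ≠ 0}) ∧
      ∀ n : ℤ, Module.Finite k (X ⟶ Y⟦n⟧)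

end Euler

section K0

variable (k : Type w) [Field k]
variable (C : Type u) [Category.{v} C] [HasZeroObject C] [Preadditive C] [HasShift C ℤ]
  [∀ n : ℤ, (shiftFunctor C n).Additive] [Pretriangulated C]

/-- The defining relations of the Grothendieck group `K₀(D_c(A))`:
`[X] - [Y] + [Z]` for every distinguished triangle `X ⟶ Y ⟶ Z ⟶ X⟦1⟧` of compact
objects. -/
def triangleRelSet : Set (FreeAbelianGroup (CompObj C)) :=
  {x | ∃ (X Y Z : CompObj C) (f : (X.obj : C) ⟶ Y.obj) (g : (Y.obj : C) ⟶ Z.obj)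
      (h : (Z.obj : C) ⟶ X.obj⟦(1 : ℤ)⟧),
    (Triangle.mk f g h ∈ distTriang C) ∧
      x = FreeAbelianGroup.of X - FreeAbelianGroup.of Y + FreeAbelianGroup.of Z}

/-- The Grothendieck group `K₀(A) = K₀(D_c(A))`: the free abelian group on the compact
objects of `D(A)` modulo the relations coming from distinguished triangles. -/
def K0 : Type u :=
  FreeAbelianGroup (CompObj C) ⧸ AddSubgroup.closure (triangleRelSet C)

noncomputable instance : AddCommGroup (K0 C) :=
  QuotientAddGroup.Quotient.addCommGroup _

/-- The class in `K₀` of a formal sum of compact objects. -/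
def toK0 : FreeAbelianGroup (CompObj C) →+ K0 C :=
  QuotientAddGroup.mk' _

variable [Linear k C]

/-- The bilinear extension of the Euler pairing to the free abelian group on compact
objects. -/
noncomputable def chiFree (x y : FreeAbelianGroup (CompObj C)) : ℤ :=
  FreeAbelianGroup.lift (fun a => FreeAbelianGroup.lift (fun b => eulerChi k C a b) y) x

/-- The kernel `Ker(χ_A) ⊆ K₀(A)` of the Euler pairing: the classes pairing to zero with
every class (expressed via arbitrary representatives in the free abelian group;
any two representatives of the same `K₀`-class have the same pairings, since the Euler
pairing is additive on distinguished triangles). -/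
noncomputable def kerChi : Set (K0 C) :=
  {x | ∀ x' : FreeAbelianGroup (CompObj C), toK0 C x' = x →
    ∀ y' : FreeAbelianGroup (CompObj C), chiFree k C x' y' = 0}

/-- The numerical Grothendieck group `K₀^num(A) = K₀(A)/Ker(χ_A)`, presented as a quotient
of the free abelian group on compact objects by the triangle relations together with the
kernel of the Euler pairing. -/
noncomputable def K0num : Type u :=
  FreeAbelianGroup (CompObj C) ⧸
    AddSubgroup.closure (triangleRelSet C ∪ {x | toK0 C x ∈ kerChi k C})

noncomputable instance : AddCommGroup (K0num k C) :=
  QuotientAddGroup.Quotient.addCommGroup _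

/-- The class in `K₀^num` of a formal sum of compact objects. -/
noncomputable def toK0num : FreeAbelianGroup (CompObj C) →+ K0num k C :=
  QuotientAddGroup.mk' _

end K0

section Serre

variable (k : Type w) [Field k]
variable (C : Type u) [Category.{v} C] [Preadditive C] [Linear k C]

/-- A Serre functor on a `k`-linear category `C`: an autoequivalence `S` together with
isomorphisms `Hom(x,y)^∨ ≅ Hom(y, Sx)`, bifunctorial in `x` and `y`. -/
structure SerreFunctor where
  /-- the Serre functor -/
  S : C ⥤ C
  /-- `S` is an autoequivalence -/
  equiv : S.IsEquivalence
  /-- the pairing `Hom(x,y) → Hom(y,Sx)^∨`, i.e. the isomorphism `Hom(x,y)^∨ ≅ Hom(y,Sx)`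
  read as a perfect pairing `Hom(x,y) ⊗ Hom(y,Sx) → k` -/
  pairing : ∀ x y : C, (x ⟶ y) →ₗ[k] Module.Dual k (y ⟶ S.obj x)
  /-- the pairing is perfect -/
  bij : ∀ x y : C, Function.Bijective (pairing x y)
  /-- bifunctoriality in the second variable -/
  nat_right : ∀ {x y y' : C} (f : x ⟶ y) (h : y ⟶ y') (φ : y' ⟶ S.obj x),
    pairing x y' (f ≫ h) φ = pairing x y f (h ≫ φ)
  /-- bifunctoriality in the first variable -/
  nat_left : ∀ {x x' y : C} (e : x' ⟶ x) (f : x ⟶ y) (φ : y ⟶ S.obj x'),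
    pairing x' y (e ≫ f) φ = pairing x y f (φ ≫ S.map e)

end Serre

section Saturated

variable (k : Type w) [Field k]
variable (C : Type u) [Category.{v} C] [HasZeroObject C] [Preadditive C] [HasShift C ℤ]
  [∀ n : ℤ, (shiftFunctor C n).Additive] [Pretriangulated C] [Linear k C]

/-- The triangulated category `D_c(A)` of compact objects is *right saturated*: every
contravariant cohomological functor `H : D_c(A)ᵒᵖ → Vect_k` of finite type (it takes
distinguished triangles to exact sequences, and `⊕ₙ H(x⟦n⟧)` is finite dimensional for
every `x`) is representable by an object of `D_c(A)`. -/
def RightSaturatedCompacts : Prop :=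
  ∀ H : (CompObj C)ᵒᵖ ⥤ ModuleCat.{v} k,
    -- `H` is cohomological
    (∀ (X Y Z : CompObj C) (f : (X.obj : C) ⟶ Y.obj) (g : (Y.obj : C) ⟶ Z.obj)
        (h : (Z.obj : C) ⟶ X.obj⟦(1 : ℤ)⟧),
        (Triangle.mk f g h ∈ distTriang C) →
          Function.Exact (H.map (homOf C g).op) (H.map (homOf C f).op)) →
    -- `H` is of finite type
    (∀ x : CompObj C,
      (Set.Finite {n : ℤ | ∃ y : CompObj C,
          Nonempty ((y.obj : C) ≅ x.obj⟦n⟧) ∧ ¬ Subsingleton (H.obj (op y))}) ∧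
      (∀ (n : ℤ) (y : CompObj C), Nonempty ((y.obj : C) ≅ x.obj⟦n⟧) →
          Module.Finite k (H.obj (op y)))) →
    -- then `H` is representable
    ∃ A : CompObj C, Nonempty (H ≅ (linearYoneda k (CompObj C)).obj A)

end Saturated


section Induced

variable {C : Type u} {D : Type u'} [Category.{v} C] [Category.{v} D]
  [Preadditive C] [Preadditive D]

/-- The map on free abelian groups on compact objects induced by a functor which
preserves compact objects (e.g. the map `K₀(A) → K₀(B)` induced by `f^*`). -/
def inducedFreeMap (F : C ⥤ D)
    (hF : ∀ X : C, IsCompactObj C X → IsCompactObj D (F.obj X)) :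
    FreeAbelianGroup (CompObj C) →+ FreeAbelianGroup (CompObj D) :=
  FreeAbelianGroup.map (fun a => ⟨F.obj a.obj, hF a.obj a.property⟩)

end Induced

section Aux

variable {C : Type u} [Category.{v} C] [Preadditive C]

/-- The canonical comparison map appearing in `IsCompactObj`. -/
noncomputable def sigmaHom (X : C) {ι : Type v} (Y : ι → C) [HasCoproduct Y] [DecidableEq ι] :
    (Π₀ i, (X ⟶ Y i)) →+ (X ⟶ ∐ Y) :=
  DFinsupp.sumAddHom (fun i =>
    AddMonoidHom.mk' (fun (g : X ⟶ Y i) => g ≫ Sigma.ι Y i)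
      (fun _ _ => Preadditive.add_comp _ _ _ _ _ _))

lemma sigmaHom_single (X : C) {ι : Type v} (Y : ι → C) [HasCoproduct Y] [DecidableEq ι]
    (i : ι) (g : X ⟶ Y i) :
    sigmaHom X Y (DFinsupp.single i g) = g ≫ Sigma.ι Y i := by
  simp [sigmaHom]

lemma isCompactObj_iff (X : C) :
    IsCompactObj C X ↔ ∀ ⦃ι : Type v⦄ (Y : ι → C) [HasCoproduct Y],
      letI : DecidableEq ι := Classical.decEq ι
      Function.Bijective (sigmaHom X Y) :=
  Iff.rfl

lemma sigmaHom_bijective_transfer {D : Type u'} [Category.{v} D] [Preadditive D]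
    {X : C} {X' : D} {ι : Type v} [DecidableEq ι]
    (Y : ι → C) (Y' : ι → D) [HasCoproduct Y] [HasCoproduct Y']
    (e : ∀ i, (X ⟶ Y i) ≃+ (X' ⟶ Y' i)) (E : (X ⟶ ∐ Y) ≃+ (X' ⟶ ∐ Y'))
    (hcomm : ∀ (i : ι) (g : X ⟶ Y i), E (g ≫ Sigma.ι Y i) = e i g ≫ Sigma.ι Y' i)
    (h : Function.Bijective (sigmaHom X Y)) :
    Function.Bijective (sigmaHom X' Y') := by
  have key : (E.toAddMonoidHom.comp (sigmaHom X Y)) =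
      (sigmaHom X' Y').comp (DFinsupp.mapRange.addEquiv e).toAddMonoidHom := by
    apply DFinsupp.addHom_ext
    intro i g
    simp only [AddMonoidHom.comp_apply, AddEquiv.coe_toAddMonoidHom, sigmaHom_single,
      DFinsupp.mapRange.addEquiv_apply, DFinsupp.mapRange_single, hcomm]
  have hfun : ⇑(sigmaHom X' Y') ∘ ⇑(DFinsupp.mapRange.addEquiv e) = ⇑E ∘ ⇑(sigmaHom X Y) := by
    funext d
    exact (DFunLike.congr_fun key d).symm
  have h3 : Function.Bijective (⇑(sigmaHom X' Y') ∘ ⇑(DFinsupp.mapRange.addEquiv e)) := by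
    rw [hfun]; exact E.bijective.comp h
  exact (Function.Bijective.of_comp_iff _ (DFinsupp.mapRange.addEquiv e).bijective).mp h3

/-- Precomposition with an isomorphism, as an additive equivalence. -/
@[simps]
def precompAddEquiv {X X' : C} (e : X ≅ X') (W : C) : (X ⟶ W) ≃+ (X' ⟶ W) where
  toFun g := e.inv ≫ g
  invFun g := e.hom ≫ g
  left_inv g := by simp
  right_inv g := by simp
  map_add' _ _ := Preadditive.comp_add _ _ _ _ _ _

/-- Postcomposition with an isomorphism, as an additive equivalence. -/
@[simps]
def postcompAddEquiv {W W' : C} (e : W ≅ W') (X : C) : (X ⟶ W) ≃+ (X ⟶ W') where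
  toFun g := g ≫ e.hom
  invFun g := g ≫ e.inv
  left_inv g := by simp
  right_inv g := by simp
  map_add' _ _ := Preadditive.add_comp _ _ _ _ _ _

lemma isCompactObj_of_iso {X X' : C} (e : X ≅ X') (h : IsCompactObj C X) :
    IsCompactObj C X' := by
  intro ι Y _
  letI : DecidableEq ι := Classical.decEq ι
  exact sigmaHom_bijective_transfer Y Y (fun i => precompAddEquiv e (Y i))
    (precompAddEquiv e (∐ Y)) (fun i g => by simp) (h Y)

/-- The hom-equivalence of an adjunction whose right adjoint is additive, as an
additive equivalence. -/
@[simps!]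
def homAddEquivOfAdj {D : Type u'} [Category.{v} D] [Preadditive D]
    {F : C ⥤ D} {G : D ⥤ C} [G.Additive] (adj : F ⊣ G) (W : C) (Z : D) :
    (F.obj W ⟶ Z) ≃+ (W ⟶ G.obj Z) :=
  { adj.homEquiv W Z with
    map_add' := fun f g => by
      simp [Adjunction.homEquiv_unit, Functor.map_add, Preadditive.comp_add] }

lemma homEquiv_zero {D : Type u'} [Category.{v} D] [Preadditive D]
    {F : C ⥤ D} {G : D ⥤ C} [G.Additive] (adj : F ⊣ G) (W : C) (Z : D) :
    adj.homEquiv W Z 0 = 0 := by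
  rw [Adjunction.homEquiv_unit, Functor.map_zero, comp_zero]

lemma homEquiv_symm_zero {D : Type u'} [Category.{v} D] [Preadditive D]
    {F : C ⥤ D} {G : D ⥤ C} [G.Additive] (adj : F ⊣ G) (W : C) (Z : D) :
    (adj.homEquiv W Z).symm 0 = 0 := by
  rw [Equiv.symm_apply_eq, homEquiv_zero]

lemma isCompactObj_of_adjunction [HasCoproducts.{v} C]
    {D : Type u'} [Category.{v} D] [Preadditive D]
    (F : C ⥤ D) (G : D ⥤ C) [G.Additive] (adj : F ⊣ G)
    [PreservesColimitsOfSize.{v, v} G]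
    {X : C} (h : IsCompactObj C X) : IsCompactObj D (F.obj X) := by
  intro ι Y _
  letI : DecidableEq ι := Classical.decEq ι
  refine sigmaHom_bijective_transfer (fun i => G.obj (Y i)) Y
    (fun i => (homAddEquivOfAdj adj X (Y i)).symm)
    ((postcompAddEquiv (asIso (sigmaComparison G Y)) X).trans
      (homAddEquivOfAdj adj X (∐ Y)).symm) ?_ (h (fun i => G.obj (Y i)))
  intro i g
  show (adj.homEquiv X (∐ Y)).symm ((g ≫ Sigma.ι (fun i => G.obj (Y i)) i) ≫
      sigmaComparison G Y) = (adj.homEquiv X (Y i)).symm g ≫ Sigma.ι Y i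
  rw [Category.assoc, ι_comp_sigmaComparison]
  exact adj.homEquiv_naturality_right_symm g (Sigma.ι Y i)

lemma shift_homEquiv_zero (C : Type u) [Category.{v} C] [Preadditive C] [HasShift C ℤ]
    [∀ n : ℤ, (shiftFunctor C n).Additive] (a b : ℤ) (hab : a + b = 0) (W Z : C) :
    (shiftEquiv' C a b hab).toAdjunction.homEquiv W Z 0 = 0 := by
  haveI : (shiftEquiv' C a b hab).inverse.Additive :=
    inferInstanceAs ((shiftFunctor C b).Additive)
  exact homEquiv_zero _ _ _

lemma shift_homEquiv_symm_zero (C : Type u) [Category.{v} C] [Preadditive C] [HasShift C ℤ]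
    [∀ n : ℤ, (shiftFunctor C n).Additive] (a b : ℤ) (hab : a + b = 0) (W : C) (Z : C) :
    ((shiftEquiv' C a b hab).toAdjunction.homEquiv W Z).symm 0 = 0 := by
  rw [Equiv.symm_apply_eq, shift_homEquiv_zero]

/-- Shifts of compact objects are compact. -/
lemma isCompactObj_shift [HasCoproducts.{v} C] [HasShift C ℤ]
    [∀ n : ℤ, (shiftFunctor C n).Additive]
    {X : C} (h : IsCompactObj C X) (n : ℤ) : IsCompactObj C (X⟦n⟧) :=
  isCompactObj_of_adjunction (shiftFunctor C n) (shiftFunctor C (-n))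
    (shiftEquiv C n).toAdjunction h

end Aux

section RestrictH

variable (k : Type w) [Field k]
variable {DI : Type u} {DA : Type u'} [Category.{v} DI] [Category.{v} DA]
  [Preadditive DI] [Preadditive DA] [Linear k DA]
  (iE : DI ⥤ DA)

/-- The functor `Hom_{D(A)}(iE(-), X)` on compact objects of `D(I)`. -/
@[simps]
noncomputable def restrictH (X : DA) : (CompObj DI)ᵒᵖ ⥤ ModuleCat.{v} k where
  obj y := ModuleCat.of k (iE.obj y.unop.obj ⟶ X)
  map {y y'} f := ModuleCat.ofHom (Linear.leftComp k X
    (iE.map (show y'.unop.obj ⟶ y.unop.obj from f.unop.hom)))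
  map_id y := by
    ext φ
    show iE.map (𝟙 y.unop.obj) ≫ φ = φ
    rw [iE.map_id, Category.id_comp]
  map_comp {y y' y''} f g := by
    ext φ
    show iE.map _ ≫ φ = iE.map _ ≫ iE.map _ ≫ φ
    rw [← Category.assoc, ← iE.map_comp]
    rfl

end RestrictH

/-- Lemma 3.3(2) of the paper.  If the triangulated category `D_c(I)`
of compact objects is right saturated, then `i_* : D(A) → D(I)` preserves compact
objects. -/
theorem rightSaturated_implies_restriction_preservesCompact
    (k : Type w) [Field k]
    (DI DA : Type u)
    [Category.{v} DI] [HasZeroObject DI] [Preadditive DI] [HasShift DI ℤ]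
    [∀ n : ℤ, (shiftFunctor DI n).Additive] [Pretriangulated DI] [Linear k DI]
    [Category.{v} DA] [HasZeroObject DA] [Preadditive DA] [HasShift DA ℤ]
    [∀ n : ℤ, (shiftFunctor DA n).Additive] [Pretriangulated DA] [Linear k DA]
    [HasCoproducts.{v} DI] [HasCoproducts.{v} DA]
    (iE : DI ⥤ DA) (iR : DA ⥤ DI)
    [iE.CommShift ℤ] [iE.IsTriangulated] [iR.CommShift ℤ] [iR.IsTriangulated]
    (adjI : iE ⊣ iR)
    -- standard facts: `i^*` preserves compact objects, and the derived category `D(I)`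
    -- is compactly generated
    (hiEc : ∀ X : DI, IsCompactObj DI X → IsCompactObj DA (iE.obj X))
    (hgenI : IsCompactlyGenerated DI)
    -- Ext-finiteness (part of the definition of right saturatedness)
    (hfinI : ExtFiniteCompacts k DI) (hfinA : ExtFiniteCompacts k DA)
    -- hypothesis: `D_c(I)` is right saturated
    (hsat : RightSaturatedCompacts k DI) :
    ∀ X : DA, IsCompactObj DA X → IsCompactObj DI (iR.obj X) := by
  intro X hX
  classical
  set H := restrictH k iE X with hH
  -- `H` is cohomological
  have hcoh : ∀ (X' Y' Z' : CompObj DI) (f : (X'.obj : DI) ⟶ Y'.obj)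
      (g : (Y'.obj : DI) ⟶ Z'.obj) (h : (Z'.obj : DI) ⟶ X'.obj⟦(1 : ℤ)⟧),
      (Triangle.mk f g h ∈ distTriang DI) →
        Function.Exact (H.map (homOf DI g).op) (H.map (homOf DI f).op) := by
    intro X' Y' Z' f g h hT
    have hT' := iE.map_distinguished _ hT
    intro φ
    constructor
    · intro h0
      obtain ⟨χ, hχ⟩ := Triangle.yoneda_exact₂ _ hT' φ h0
      exact ⟨χ, hχ.symm⟩
    · rintro ⟨χ, rfl⟩
      have hχ0 : ∀ χ' : iE.obj Z'.obj ⟶ X, iE.map f ≫ iE.map g ≫ χ' = 0 := by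
        intro χ'
        rw [← Category.assoc]
        have h12 : iE.map f ≫ iE.map g = 0 := comp_distTriang_mor_zero₁₂ _ hT'
        rw [h12, zero_comp]
      exact hχ0 χ
  -- `H` is of finite type
  have hfin : ∀ x : CompObj DI,
      (Set.Finite {n : ℤ | ∃ y : CompObj DI,
          Nonempty ((y.obj : DI) ≅ x.obj⟦n⟧) ∧ ¬ Subsingleton (H.obj (op y))}) ∧
      (∀ (n : ℤ) (y : CompObj DI), Nonempty ((y.obj : DI) ≅ x.obj⟦n⟧) →
          Module.Finite k (H.obj (op y))) := by
    intro x
    constructor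
    · have hfinA' := (hfinA (iE.obj x.obj) X (hiEc _ x.property) hX).1
      refine Set.Finite.subset (hfinA'.preimage neg_injective.injOn) ?_
      rintro n ⟨y, ⟨e⟩, hns⟩
      rw [not_subsingleton_iff_nontrivial] at hns
      haveI : Nontrivial (iE.obj y.obj ⟶ X) := hns
      obtain ⟨f, hf⟩ := exists_ne (0 : iE.obj y.obj ⟶ X)
      set e' : iE.obj y.obj ≅ (iE.obj x.obj)⟦n⟧ :=
        iE.mapIso e ≪≫ (iE.commShiftIso n).app x.obj with he'
      have hf2 : e'.inv ≫ f ≠ 0 := by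
        intro h0
        apply hf
        rw [← Category.id_comp f, ← e'.hom_inv_id, Category.assoc, h0, comp_zero]
      refine ⟨(shiftEquiv' DA n (-n) (add_neg_cancel n)).toAdjunction.homEquiv _ _
        (e'.inv ≫ f), ?_⟩
      intro h0
      apply hf2
      have h1 := congrArg
        ((shiftEquiv' DA n (-n) (add_neg_cancel n)).toAdjunction.homEquiv _ _).symm h0
      rw [Equiv.symm_apply_apply] at h1
      exact h1.trans (shift_homEquiv_symm_zero DA n (-n) _ _ _)
    · intro n y _
      haveI := (hfinA (iE.obj y.obj) X (hiEc _ y.property) hX).2 0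
      show Module.Finite k (iE.obj y.obj ⟶ X)
      exact Module.Finite.equiv
        (Linear.homCongr k (Iso.refl (iE.obj y.obj)) ((shiftFunctorZero DA ℤ).app X))
  -- right saturatedness yields a representing compact object `A`
  obtain ⟨A, ⟨eIso⟩⟩ := hsat H hcoh hfin
  set ψ : iE.obj A.obj ⟶ X := eIso.inv.app (op A) (𝟙 A) with hψ
  set φ : A.obj ⟶ iR.obj X := adjI.homEquiv _ _ ψ with hφ
  have happ : ∀ (c : CompObj DI) (g : (op c).unop.obj ⟶ A.obj),
      eIso.inv.app (op c) (homOf DI g) = iE.map g ≫ ψ := by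
    intro c g
    have hnat := eIso.inv.naturality (Quiver.Hom.op (homOf DI g) : op A ⟶ op c)
    have h2 := ConcreteCategory.congr_hom hnat (𝟙 A)
    have h3 : (homOf DI g : c ⟶ A) = homOf DI g ≫ 𝟙 A := (Category.comp_id _).symm
    refine Eq.trans ?_ (h2.trans ?_)
    · exact congrArg (ConcreteCategory.hom (eIso.inv.app (op c))) h3
    · rfl
  have hbij : ∀ (c : DI), IsCompactObj DI c →
      Function.Bijective (fun g : c ⟶ A.obj => g ≫ φ) := by
    intro c hc
    have heq : ∀ g : c ⟶ A.obj, g ≫ φ =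
        adjI.homEquiv c X (eIso.inv.app (op (⟨c, hc⟩ : CompObj DI)) (homOf DI g)) := by
      intro g
      rw [happ ⟨c, hc⟩ g]
      exact (adjI.homEquiv_naturality_left g ψ).symm
    have hfn : (fun g : c ⟶ A.obj => g ≫ φ) =
        ⇑(adjI.homEquiv c X) ∘ ⇑(eIso.inv.app (op (⟨c, hc⟩ : CompObj DI))) ∘
          (homOf DI (X := ⟨c, hc⟩) (Y := A)) := funext heq
    rw [hfn]
    exact (adjI.homEquiv c X).bijective.comp
      ((ConcreteCategory.bijective_of_isIso (eIso.inv.app (op (⟨c, hc⟩ : CompObj DI)))).comp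
        ⟨fun a b hab => congrArg InducedCategory.Hom.hom hab, fun x => ⟨x.hom, rfl⟩⟩)
  -- complete `φ` to a distinguished triangle
  obtain ⟨Z, g, h, hT⟩ := Pretriangulated.distinguished_cocone_triangle φ
  -- no nonzero maps from a compact object to the cone
  have hzero : ∀ (c : DI), IsCompactObj DI c → ∀ u : c ⟶ Z, u = 0 := by
    intro c hc u
    have hinj1 : Function.Injective
        (fun v : c ⟶ A.obj⟦(1 : ℤ)⟧ => v ≫ (shiftFunctor DI (1 : ℤ)).map φ) := by
      intro v v' hvv'
      dsimp only at hvv'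
      set adjS := (shiftEquiv' DI (-(1 : ℤ)) 1 (by ring)).toAdjunction with hadjS
      have hv : ∀ w : c ⟶ A.obj⟦(1 : ℤ)⟧, w ≫ (shiftFunctor DI (1 : ℤ)).map φ =
          adjS.homEquiv _ _ ((adjS.homEquiv _ _).symm w ≫ φ) := by
        intro w
        rw [adjS.homEquiv_naturality_right]
        exact congrArg (· ≫ (shiftFunctor DI (1 : ℤ)).map φ)
          (Equiv.apply_symm_apply (adjS.homEquiv _ _) w).symm
      rw [hv v, hv v'] at hvv'
      have h2 := (adjS.homEquiv _ _).injective hvv'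
      have h3 := (hbij ((shiftFunctor DI (-(1 : ℤ))).obj c)
        (isCompactObj_shift hc (-(1 : ℤ)))).1 h2
      exact ((adjS.homEquiv _ _).symm.injective h3)
    have h31 : h ≫ (shiftFunctor DI (1 : ℤ)).map φ = 0 :=
      comp_distTriang_mor_zero₃₁ _ hT
    have h1 : u ≫ h = 0 := by
      apply hinj1
      show (u ≫ h) ≫ _ = (0 : c ⟶ A.obj⟦(1 : ℤ)⟧) ≫ _
      rw [Category.assoc, h31, comp_zero, zero_comp]
    obtain ⟨w, hw⟩ := Triangle.coyoneda_exact₃ _ hT u h1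
    obtain ⟨t, ht⟩ := (hbij c hc).2 w
    have h12 : φ ≫ g = 0 := comp_distTriang_mor_zero₁₂ _ hT
    rw [hw, ← ht]
    show (t ≫ φ) ≫ g = 0
    rw [Category.assoc, h12, comp_zero]
  -- the cone vanishes
  obtain ⟨ιG, G, hGc, hGgen⟩ := hgenI
  have hZ : IsZero Z := by
    apply hGgen
    intro i n f
    set adjS := (shiftEquiv' DI (-n) n (by ring)).toAdjunction with hadjS
    have h0 : (adjS.homEquiv _ _).symm f = 0 :=
      hzero _ (isCompactObj_shift (hGc i) (-n)) _
    have h1 := congrArg (adjS.homEquiv _ _) h0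
    exact (Equiv.apply_symm_apply _ f).symm.trans
      (h1.trans (shift_homEquiv_zero DI (-n) n (by ring) _ _))
  -- hence `φ` is an isomorphism and `iR X` is compact
  have hiso : IsIso φ := (Triangle.isZero₃_iff_isIso₁ _ hT).1 hZ
  exact isCompactObj_of_iso (asIso φ) A.property


end DGRecollement
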